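/- Let d ≥ 1 and let W : ℝ^d → ℝ ∪ {+∞} be measurable, bounded below by a finite constant, and locally integrable, and suppose the limit W_∞ := lim_{|x|→∞} W(x) exists and is finite. Set W̃ := W − W_∞. If the positive part W̃₊ is integrable on ℝ^d and ∫_{ℝ^d} W̃ < 0 (with the integral possibly equal to −∞), then W is unstable: there exists a probability measure ρ on ℝ^d with E(ρ) < (1/2)W_∞. -/

import Mathlib

open MeasureTheory Filter Metric
open scoped ENNReal

/-- `ℝ^d` with the Euclidean structure. -/
abbrev Ed (d : ℕ) : Type := EuclideanSpace ℝ (Fin d)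

/-- The positive part of an extended real number, as an element of `ℝ≥0∞`. -/
noncomputable def EReal.posPart (x : EReal) : ℝ≥0∞ := (x ⊔ 0).abs

/-- The integral of an `EReal`-valued function, defined as the difference (in `EReal`)
of the lower integrals of the positive and the negative parts. -/
noncomputable def eInt {α : Type*} [MeasurableSpace α] (μ : Measure α) (f : α → EReal) :
    EReal :=
  ((∫⁻ x, (f x).posPart ∂μ : ℝ≥0∞) : EReal) - ((∫⁻ x, (-f x).posPart ∂μ : ℝ≥0∞) : EReal)

/-- The interaction energy `E(ρ) = (1/2) ∬ W(x-y) dρ(x) dρ(y)`, with values in `EReal`. -/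
noncomputable def energy {d : ℕ} (W : Ed d → EReal) (ρ : Measure (Ed d)) : EReal :=
  ((1 / 2 : ℝ) : EReal) * eInt (ρ.prod ρ) (fun p => W (p.1 - p.2))

/-- The support of a measure: the set of points all of whose open neighbourhoods have
positive measure. -/
def msupport {α : Type*} [TopologicalSpace α] [MeasurableSpace α] (μ : Measure α) : Set α :=
  {x | ∀ U : Set α, IsOpen U → x ∈ U → 0 < μ U}

/-- `ρ ∈ P_R(ℝ^d)`: the support of `ρ` is contained in the closed ball `B̄(0,R)`. -/
def InBall {d : ℕ} (ρ : Measure (Ed d)) (R : ℝ) : Prop :=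
  msupport ρ ⊆ Metric.closedBall (0 : Ed d) R

/-- `ρ` is a global minimiser of the interaction energy on `P(ℝ^d)`. -/
def IsMinimiser {d : ℕ} (W : Ed d → EReal) (ρ : Measure (Ed d)) : Prop :=
  IsProbabilityMeasure ρ ∧
    ∀ μ : Measure (Ed d), IsProbabilityMeasure μ → energy W ρ ≤ energy W μ

/-- `ρ` is a global minimiser of the interaction energy on `P_R(ℝ^d)`. -/
def IsMinimiserOn {d : ℕ} (W : Ed d → EReal) (ρ : Measure (Ed d)) (R : ℝ) : Prop :=
  IsProbabilityMeasure ρ ∧ InBall ρ R ∧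
    ∀ μ : Measure (Ed d), IsProbabilityMeasure μ → InBall μ R → energy W ρ ≤ energy W μ

/-! Take `ρ` uniform on a large ball `B_R` and split `W - W_∞ = W̃₊ - W̃₋`. Translation
invariance of Lebesgue measure gives `∬ W̃₊(x - y) dρ dρ ≤ |B_R|⁻¹ ∫ W̃₊`, and since `x - B_S ⊆ B_R`
for `|x| < R - S`, also `∬ W̃₋(x - y) dρ dρ ≥ |B_{R-S}| |B_R|⁻² ∫_{B_S} W̃₋`. As `∫ W̃₊ < ∫ W̃₋`,
some `S` has `∫ W̃₊ < ∫_{B_S} W̃₋`; as `|B_{R-S}| / |B_R| → 1`, some `R` then makes the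
interaction integral of `W - W_∞` negative, i.e. `E(ρ) < W_∞ / 2`. The lower bound on `W` keeps
all these integrals finite, so that they can be computed as Bochner integrals. -/

open ProbabilityTheory

lemma EReal.posPart_eq_toENNReal (x : EReal) : x.posPart = x.toENNReal := by
  induction x using EReal.rec with
  | bot => simp [EReal.posPart]
  | coe r =>
    rcases le_total r 0 with h | h
    · simp [EReal.posPart, h]
    · simp [EReal.posPart, h, EReal.abs_def, abs_of_nonneg]
  | top => rfl

lemma EReal.coe_mul_lt_coe_mul {a : ℝ} (ha : 0 < a) {x : EReal} {w : ℝ} (h : x < w) :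
    (a : EReal) * x < a * w := by
  induction x using EReal.rec with
  | bot => simpa [EReal.coe_mul_bot_of_pos ha] using EReal.bot_lt_coe (a * w)
  | coe t => exact_mod_cast mul_lt_mul_of_pos_left (EReal.coe_lt_coe_iff.1 h) ha
  | top => exact absurd h not_top_lt

lemma EReal.toENNReal_neg_sub_le {c w : ℝ} {x : EReal} (hx : (c : EReal) ≤ x) :
    (-(x - w)).toENNReal ≤ ENNReal.ofReal (w - c) := by
  have h : -(x - w) ≤ ((w - c : ℝ) : EReal) := by
    rw [← _root_.neg_sub c w, EReal.coe_neg, EReal.coe_sub]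
    exact EReal.neg_le_neg_iff.2 (EReal.sub_le_sub hx le_rfl)
  exact EReal.toENNReal_le_toENNReal h

section eInt

variable {α : Type*} [MeasurableSpace α] {μ : Measure α}

lemma eInt_eq (f : α → EReal) :
    eInt μ f = (∫⁻ x, (f x).toENNReal ∂μ : EReal) - (∫⁻ x, (-f x).toENNReal ∂μ : EReal) := by
  simp only [eInt, EReal.posPart_eq_toENNReal]

lemma eInt_congr_ae {f g : α → EReal} (h : f =ᵐ[μ] g) : eInt μ f = eInt μ g := by
  rw [eInt_eq, eInt_eq, lintegral_congr_ae (h.mono fun x hx => congrArg EReal.toENNReal hx),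
    lintegral_congr_ae (h.mono fun x hx => congrArg (fun y => (-y).toENNReal) hx)]

lemma eInt_coe_of_integrable {F : α → ℝ} (hF : Integrable F μ) :
    eInt μ (fun x => (F x : EReal)) = ∫ x, F x ∂μ := by
  have hneg := hF.neg.lintegral_lt_top
  simp only [Pi.neg_apply] at hneg
  simp_rw [eInt_eq, ← EReal.coe_neg, EReal.real_coe_toENNReal]
  rw [integral_eq_lintegral_pos_part_sub_lintegral_neg_part hF, EReal.coe_sub,
    EReal.coe_ennreal_toReal hF.lintegral_lt_top.ne, EReal.coe_ennreal_toReal hneg.ne]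

lemma eInt_neg_iff {f : α → EReal} (hf : ∫⁻ x, (f x).toENNReal ∂μ ≠ ⊤) :
    eInt μ f < 0 ↔ ∫⁻ x, (f x).toENNReal ∂μ < ∫⁻ x, (-f x).toENNReal ∂μ := by
  rw [eInt_eq, EReal.sub_neg (.inl (by simpa using hf)) (.inl (EReal.coe_ennreal_ne_bot _)),
    EReal.coe_ennreal_lt_coe_ennreal_iff]

lemma eInt_lt_of_eInt_sub_neg [IsProbabilityMeasure μ] {f : α → EReal} (hf : Measurable f)
    {c : ℝ} (hc : ∀ x, (c : EReal) ≤ f x) {w : ℝ}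
    (hpos : ∫⁻ x, (f x - w).toENNReal ∂μ ≠ ⊤) (hneg : eInt μ (fun x => f x - w) < 0) :
    eInt μ f < w := by
  set F : α → ℝ := fun x => (f x).toReal
  have hfinite : ∀ᵐ x ∂μ, f x = F x := by
    filter_upwards [ae_lt_top (hf.sub_const _).ereal_toENNReal hpos] with x hx
    have htop : f x ≠ ⊤ := fun h => by simp [h] at hx
    exact (EReal.coe_toReal htop ((EReal.coe_ne_bot c).bot_lt.trans_le (hc x)).ne').symm
  have hF : Integrable F μ := by
    refine integrable_of_le_of_le (g₁ := fun _ => c)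
      (g₂ := fun x => w + ((f x - w).toENNReal).toReal)
      (measurable_ereal_toReal.comp hf).aestronglyMeasurable ?_ ?_ (integrable_const c)
      ((integrable_const w).add (integrable_toReal_of_lintegral_ne_top
        (hf.sub_const _).ereal_toENNReal.aemeasurable hpos))
    · filter_upwards [hfinite] with x hx
      exact EReal.coe_le_coe_iff.1 (hx ▸ hc x)
    · filter_upwards [hfinite] with x hx
      rw [hx, ← EReal.coe_sub, EReal.real_coe_toENNReal, ENNReal.toReal_ofReal']
      linarith [le_max_left (F x - w) 0]
  have hsub : eInt μ (fun x => f x - w) = ∫ x, (F x - w) ∂μ := by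
    have hFw : Integrable (fun x => F x - w) μ := hF.sub (integrable_const w)
    rw [← eInt_coe_of_integrable hFw]
    exact eInt_congr_ae (hfinite.mono fun x hx => by simp only [hx, EReal.coe_sub])
  rw [hsub, integral_sub hF (integrable_const w), integral_const, probReal_univ, one_smul] at hneg
  rw [eInt_congr_ae hfinite, eInt_coe_of_integrable hF, EReal.coe_lt_coe_iff]
  exact sub_neg.1 (EReal.coe_lt_coe_iff.1 hneg)

end eInt

section ConvolutionBounds

variable {G : Type*} [MeasurableSpace G] [AddCommGroup G] [MeasurableAdd₂ G] [MeasurableNeg G]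
  {μ : Measure G} [μ.IsAddLeftInvariant] [μ.IsNegInvariant] {q : G → ℝ≥0∞}

lemma lintegral_prod_cond_sub_le (hq : Measurable q) (s : Set G) :
    ∫⁻ p, q (p.1 - p.2) ∂(μ[|s].prod μ[|s]) ≤ (μ s)⁻¹ * ∫⁻ z, q z ∂μ := by
  have hinner : ∀ x, ∫⁻ y, q (x - y) ∂μ[|s] ≤ (μ s)⁻¹ * ∫⁻ z, q z ∂μ := fun x => calc
    ∫⁻ y, q (x - y) ∂μ[|s] = (μ s)⁻¹ * ∫⁻ y in s, q (x - y) ∂μ := by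
      rw [ProbabilityTheory.cond, lintegral_smul_measure, smul_eq_mul]
    _ ≤ (μ s)⁻¹ * ∫⁻ y, q (x - y) ∂μ := by gcongr; exact Measure.restrict_le_self
    _ = (μ s)⁻¹ * ∫⁻ z, q z ∂μ := by rw [lintegral_sub_left_eq_self]
  calc ∫⁻ p, q (p.1 - p.2) ∂(μ[|s].prod μ[|s])
      = ∫⁻ x, ∫⁻ y, q (x - y) ∂μ[|s] ∂μ[|s] :=
        lintegral_prod _ (hq.comp measurable_sub).aemeasurable
    _ ≤ ∫⁻ _, (μ s)⁻¹ * ∫⁻ z, q z ∂μ ∂μ[|s] := lintegral_mono hinner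
    _ ≤ (μ s)⁻¹ * ∫⁻ z, q z ∂μ := by
      rw [lintegral_const]; exact mul_le_of_le_one_right' prob_le_one

lemma le_lintegral_prod_cond_sub (hq : Measurable q) {s t u : Set G} (hs : MeasurableSet s)
    (ht : MeasurableSet t) (hstu : ∀ x ∈ u, ∀ z ∈ t, x - z ∈ s) :
    μ[u|s] * ((μ s)⁻¹ * ∫⁻ z in t, q z ∂μ) ≤ ∫⁻ p, q (p.1 - p.2) ∂(μ[|s].prod μ[|s]) := by
  have hinner : ∀ x ∈ u, (μ s)⁻¹ * ∫⁻ z in t, q z ∂μ ≤ ∫⁻ y, q (x - y) ∂μ[|s] := by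
    intro x hx
    have hind : ∀ y, t.indicator q (x - y) ≤ s.indicator (fun y => q (x - y)) y := by
      intro y
      by_cases hy : x - y ∈ t
      · have hys : y ∈ s := by simpa only [sub_sub_cancel] using hstu x hx _ hy
        simp [hy, hys]
      · simp [hy]
    calc (μ s)⁻¹ * ∫⁻ z in t, q z ∂μ = (μ s)⁻¹ * ∫⁻ y, t.indicator q (x - y) ∂μ := by
          rw [lintegral_sub_left_eq_self, lintegral_indicator ht]
      _ ≤ (μ s)⁻¹ * ∫⁻ y, s.indicator (fun y => q (x - y)) y ∂μ := by
          gcongr with y; exact hind y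
      _ = ∫⁻ y, q (x - y) ∂μ[|s] := by
          rw [lintegral_indicator hs, ProbabilityTheory.cond, lintegral_smul_measure, smul_eq_mul]
  calc μ[u|s] * ((μ s)⁻¹ * ∫⁻ z in t, q z ∂μ)
      = ∫⁻ _ in u, (μ s)⁻¹ * ∫⁻ z in t, q z ∂μ ∂μ[|s] := by rw [setLIntegral_const, mul_comm]
    _ ≤ ∫⁻ x in u, ∫⁻ y, q (x - y) ∂μ[|s] ∂μ[|s] :=
        setLIntegral_mono ((hq.comp measurable_sub).lintegral_prod_right') hinner
    _ ≤ ∫⁻ x, ∫⁻ y, q (x - y) ∂μ[|s] ∂μ[|s] := setLIntegral_le_lintegral _ _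
    _ = ∫⁻ p, q (p.1 - p.2) ∂(μ[|s].prod μ[|s]) :=
        (lintegral_prod _ (hq.comp measurable_sub).aemeasurable).symm

end ConvolutionBounds

lemma exists_lt_setLIntegral_ball {X : Type*} [PseudoMetricSpace X] [MeasurableSpace X]
    [OpensMeasurableSpace X] {μ : Measure X} {f : X → ℝ≥0∞} {a : ℝ≥0∞} (x₀ : X)
    (h : a < ∫⁻ x, f x ∂μ) : ∃ n : ℕ, a < ∫⁻ x in ball x₀ n, f x ∂μ := by
  have hlim : Tendsto (fun n : ℕ => μ.withDensity f (ball x₀ n)) atTop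
      (nhds (μ.withDensity f (⋃ n : ℕ, ball x₀ n))) :=
    tendsto_measure_iUnion_atTop fun m n hmn => ball_subset_ball (Nat.cast_le.2 hmn)
  rw [iUnion_ball_nat, withDensity_apply _ MeasurableSet.univ, Measure.restrict_univ] at hlim
  obtain ⟨n, hn⟩ := (hlim.eventually (lt_mem_nhds h)).exists
  exact ⟨n, by rwa [withDensity_apply _ measurableSet_ball] at hn⟩

lemma eventually_mul_pow_lt_mul_sub_pow {a b : ℝ} (hab : a < b) (S : ℝ) (d : ℕ) :
    ∀ᶠ R in atTop, a * R ^ d < b * (R - S) ^ d := by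
  have hlim : Tendsto (fun R : ℝ => b * (1 - S / R) ^ d) atTop (nhds b) := by
    simpa using ((tendsto_const_nhds (x := (1 : ℝ)).sub
      (tendsto_const_nhds (x := S).div_atTop tendsto_id)).pow d).const_mul b
  filter_upwards [hlim.eventually (lt_mem_nhds hab), eventually_gt_atTop 0] with R hR hR0
  have hsplit : b * (R - S) ^ d = b * (1 - S / R) ^ d * R ^ d := by
    rw [mul_assoc, ← mul_pow, sub_mul, div_mul_cancel₀ _ hR0.ne', one_mul]
  rw [hsplit]
  exact mul_lt_mul_of_pos_right hR (pow_pos hR0 d)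

lemma eventually_mul_addHaar_ball_lt {E : Type*} [NormedAddCommGroup E] [NormedSpace ℝ E]
    [FiniteDimensional ℝ E] [MeasurableSpace E] [BorelSpace E] (μ : Measure E)
    [μ.IsAddHaarMeasure] {a b : ℝ≥0∞} (hab : a < b) (hb : b ≠ ⊤) (S : ℝ) :
    ∀ᶠ R in atTop, a * μ (ball 0 R) < b * μ (ball 0 (R - S)) := by
  have hab' : a.toReal < b.toReal := ENNReal.toReal_strict_mono hb hab
  filter_upwards [eventually_mul_pow_lt_mul_sub_pow hab' S (Module.finrank ℝ E),
    eventually_gt_atTop S, eventually_gt_atTop 0] with R hR hRS hR0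
  rw [Measure.addHaar_ball_of_pos μ 0 hR0, Measure.addHaar_ball_of_pos μ 0 (sub_pos.2 hRS),
    ← mul_assoc, ← mul_assoc]
  refine ENNReal.mul_lt_mul_left (measure_ball_pos μ 0 one_pos).ne' measure_ball_lt_top.ne ?_
  rw [← ENNReal.ofReal_toReal (hab.trans_le le_top).ne, ← ENNReal.ofReal_toReal hb,
    ← ENNReal.ofReal_mul ENNReal.toReal_nonneg, ← ENNReal.ofReal_mul ENNReal.toReal_nonneg]
  exact (ENNReal.ofReal_lt_ofReal_iff_of_nonneg (by positivity)).2 hR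

lemma exists_lintegral_prod_cond_ball_sub_lt {E : Type*} [NormedAddCommGroup E]
    [NormedSpace ℝ E] [FiniteDimensional ℝ E] [MeasurableSpace E] [BorelSpace E]
    (μ : Measure E) [μ.IsAddHaarMeasure] {p n : E → ℝ≥0∞} (hp : Measurable p)
    (hn : Measurable n) {C : ℝ≥0∞} (hnC : ∀ z, n z ≤ C) (hC : C ≠ ⊤)
    (hpn : ∫⁻ z, p z ∂μ < ∫⁻ z, n z ∂μ) :
    ∃ R > 0, ∫⁻ x, p (x.1 - x.2) ∂(μ[|ball 0 R].prod μ[|ball 0 R])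
      < ∫⁻ x, n (x.1 - x.2) ∂(μ[|ball 0 R].prod μ[|ball 0 R]) := by
  obtain ⟨S, hS⟩ := exists_lt_setLIntegral_ball 0 hpn
  have hS_ne_top : ∫⁻ z in ball 0 S, n z ∂μ ≠ ⊤ := by
    refine ((lintegral_mono hnC).trans_lt ?_).ne
    rw [setLIntegral_const]
    exact ENNReal.mul_lt_top hC.lt_top measure_ball_lt_top
  obtain ⟨R, hRS, hR⟩ :=
    ((eventually_mul_addHaar_ball_lt μ hS hS_ne_top S).and (eventually_gt_atTop 0)).exists
  refine ⟨R, hR, ?_⟩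
  have hB0 : μ (ball 0 R) ≠ 0 := (measure_ball_pos μ 0 hR).ne'
  have hBtop : μ (ball 0 R) ≠ ⊤ := measure_ball_lt_top.ne
  have hsub : ∀ x ∈ ball (0 : E) (R - S), ∀ z ∈ ball (0 : E) S, x - z ∈ ball 0 R := by
    intro x hx z hz
    rw [mem_ball_zero_iff] at hx hz ⊢
    linarith [norm_sub_le x z]
  refine (lintegral_prod_cond_sub_le hp _).trans_lt (lt_of_lt_of_le ?_
    (le_lintegral_prod_cond_sub hn measurableSet_ball measurableSet_ball hsub))
  rw [cond_apply' measurableSet_ball, Set.inter_eq_right.2 (ball_subset_ball (by simp))]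
  calc (μ (ball 0 R))⁻¹ * ∫⁻ z, p z ∂μ
      < (μ (ball 0 R))⁻¹ * ((∫⁻ z in ball 0 S, n z ∂μ) * μ (ball 0 (R - S)) / μ (ball 0 R)) :=
        ENNReal.mul_lt_mul_right (ENNReal.inv_ne_zero.2 hBtop) (ENNReal.inv_ne_top.2 hB0)
          ((ENNReal.lt_div_iff_mul_lt (.inl hB0) (.inl hBtop)).2 hRS)
    _ = _ := by rw [div_eq_mul_inv]; ring

theorem unstable_of_negative_integral_general
    {d : ℕ} (W : Ed d → EReal) (hWmeas : Measurable W)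
    (c : ℝ) (hbound : ∀ x, (c : EReal) ≤ W x)
    (Winf : ℝ)
    (hposint : ∫⁻ x, (W x - (Winf : EReal)).posPart ∂volume < ⊤)
    (hneg : eInt volume (fun x => W x - (Winf : EReal)) < 0) :
    ∃ ρ : Measure (Ed d), IsProbabilityMeasure ρ ∧
      energy W ρ < ((1 / 2 : ℝ) : EReal) * ((Winf : ℝ) : EReal) := by
  simp only [EReal.posPart_eq_toENNReal] at hposint
  have hW' : Measurable fun z => W z - (Winf : EReal) := hWmeas.sub_const _
  obtain ⟨R, hR, hlt⟩ := exists_lintegral_prod_cond_ball_sub_lt volume hW'.ereal_toENNReal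
    hW'.neg.ereal_toENNReal (fun z => EReal.toENNReal_neg_sub_le (hbound z))
    ENNReal.ofReal_ne_top ((eInt_neg_iff hposint.ne).1 hneg)
  have hρ : IsProbabilityMeasure volume[|ball (0 : Ed d) R] :=
    cond_isProbabilityMeasure_of_finite (measure_ball_pos volume 0 hR).ne'
      measure_ball_lt_top.ne
  refine ⟨_, hρ, EReal.coe_mul_lt_coe_mul one_half_pos ?_⟩
  exact eInt_lt_of_eInt_sub_neg (hWmeas.comp measurable_sub) (fun _ => hbound _) hlt.ne_top
    ((eInt_neg_iff hlt.ne_top).2 hlt)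

/-- **Lemma (instability, finite limit case).** If `W` is measurable, bounded below by a
finite constant, locally integrable, `W(x) → W_∞ ∈ ℝ` as `|x| → ∞`, the positive part of
`W̃ := W − W_∞` is integrable and `∫ W̃ < 0` (possibly `−∞`), then `W` is unstable. -/
theorem unstable_of_negative_integral
    {d : ℕ} (hd : 1 ≤ d) (W : Ed d → EReal) (hWmeas : Measurable W)
    (c : ℝ) (hbound : ∀ x, (c : EReal) ≤ W x)
    (hloc : ∀ (x : Ed d) (r : ℝ), 0 < r →
      ∫⁻ y in Metric.ball x r, (W y).abs ∂volume < ⊤)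
    (Winf : ℝ) (hlim : Tendsto W (cocompact (Ed d)) (nhds ((Winf : ℝ) : EReal)))
    (hposint : ∫⁻ x, (W x - (Winf : EReal)).posPart ∂volume < ⊤)
    (hneg : eInt volume (fun x => W x - (Winf : EReal)) < 0) :
    ∃ ρ : Measure (Ed d), IsProbabilityMeasure ρ ∧
      energy W ρ < ((1 / 2 : ℝ) : EReal) * ((Winf : ℝ) : EReal) :=
  unstable_of_negative_integral_general W hWmeas c hbound Winf hposint hneg
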